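/- Let K be an algebraically closed field of characteristic zero, A a unital associative K-algebra, and ⟪-,-⟫ : A⊗A → A⊗A a K-linear map satisfying the Leibniz rules. Equip A⊗A⊗A with the componentwise multiplication. Then for all elements of A: (i) DJac(a,b,c1c2) = (c1⊗1⊗1)·DJac(a,b,c2) + DJac(a,b,c1)·(1⊗1⊗c2); (ii) DJac(a,b1b2,c) = (1⊗1⊗b1)·DJac(a,b2,c) + DJac(a,b1,c)·(1⊗b2⊗1); (iii) DJac(a1a2,b,c) = (1⊗a1⊗1)·DJac(a2,b,c) + DJac(a1,b,c)·(a2⊗1⊗1) − T, where T is the image of ⟪a2,c⟫ ⊗ (⟪b,a1⟫ + ⟪a1,b⟫°) under the linear map A⊗A⊗A⊗A → A⊗A⊗A sending (u'⊗u'')⊗(w'⊗w'') to u' ⊗ w' ⊗ (w''u''). -/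
import Mathlib
set_option synthInstance.maxHeartbeats 800000
set_option maxHeartbeats 1600000


open TensorProduct

noncomputable section

variable (K : Type*) [Field K]
variable (A : Type*) [Ring A] [Algebra K A]

/-- Leibniz rules for a double-bracket-type operation. -/
def LeibnizRules (D : A ⊗[K] A →ₗ[K] A ⊗[K] A) : Prop :=
  (∀ a b c : A,
      D (a ⊗ₜ[K] (b * c)) =
        (b ⊗ₜ[K] (1 : A)) * D (a ⊗ₜ[K] c) + D (a ⊗ₜ[K] b) * ((1 : A) ⊗ₜ[K] c))
  ∧ (∀ a b c : A,
      D ((a * b) ⊗ₜ[K] c) =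
        ((1 : A) ⊗ₜ[K] a) * D (b ⊗ₜ[K] c) + D (a ⊗ₜ[K] c) * (b ⊗ₜ[K] (1 : A)))

/-- The associated bracket `{a,b} = m(⟪a,b⟫)`. -/
def br (D : A ⊗[K] A →ₗ[K] A ⊗[K] A) (a b : A) : A :=
  LinearMap.mul' K A (D (a ⊗ₜ[K] b))

/-- The K-span of commutators `[A,A]`. -/
def commutatorSpan : Submodule K A :=
  Submodule.span K {x : A | ∃ a b : A, x = a * b - b * a}

/-- The flip on `A ⊗ A`. -/
def flipT : A ⊗[K] A →ₗ[K] A ⊗[K] A := (TensorProduct.comm K A A).toLinearMap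

/-- Swap of the last two tensor factors of `(A ⊗ A) ⊗ A`. -/
def swap23 : ((A ⊗[K] A) ⊗[K] A) →ₗ[K] ((A ⊗[K] A) ⊗[K] A) :=
  (TensorProduct.assoc K A A A).symm.toLinearMap ∘ₗ
    (LinearMap.lTensor A (TensorProduct.comm K A A).toLinearMap) ∘ₗ
    (TensorProduct.assoc K A A A).toLinearMap

/-- `⟪a, -⟫_L` on double tensors: `b ⊗ c ↦ ⟪a,b⟫ ⊗ c`. -/
def dL (D : A ⊗[K] A →ₗ[K] A ⊗[K] A) (a : A) :
    A ⊗[K] A →ₗ[K] (A ⊗[K] A) ⊗[K] A :=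
  LinearMap.rTensor A (D ∘ₗ TensorProduct.mk K A A a)

/-- `⟪a, -⟫_R` on double tensors: `b ⊗ c ↦ b ⊗ ⟪a,c⟫`. -/
def dR (D : A ⊗[K] A →ₗ[K] A ⊗[K] A) (a : A) :
    A ⊗[K] A →ₗ[K] (A ⊗[K] A) ⊗[K] A :=
  (TensorProduct.assoc K A A A).symm.toLinearMap ∘ₗ
    LinearMap.lTensor A (D ∘ₗ TensorProduct.mk K A A a)

/-- `⟪-, c⟫_L` on double tensors: `b ⊗ b' ↦ ⟪b,c⟫' ⊗ b' ⊗ ⟪b,c⟫''`. -/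
def dLfst (D : A ⊗[K] A →ₗ[K] A ⊗[K] A) (c : A) :
    A ⊗[K] A →ₗ[K] (A ⊗[K] A) ⊗[K] A :=
  swap23 K A ∘ₗ LinearMap.rTensor A (D ∘ₗ (TensorProduct.mk K A A).flip c)

/-- The double Jacobiator. -/
def DJac (D : A ⊗[K] A →ₗ[K] A ⊗[K] A) (a b c : A) : (A ⊗[K] A) ⊗[K] A :=
  dL K A D a (D (b ⊗ₜ[K] c)) - dR K A D b (D (a ⊗ₜ[K] c)) - dLfst K A D c (D (a ⊗ₜ[K] b))

/-- `c ⊗₁ (-)` : `w' ⊗ w'' ↦ w' ⊗ c ⊗ w''`. -/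
def otimes1 (c : A) : A ⊗[K] A →ₗ[K] (A ⊗[K] A) ⊗[K] A :=
  LinearMap.rTensor A ((TensorProduct.mk K A A).flip c)

variable {ι : Type*}

/-- Mixed double algebra structure of weight `lam` with respect to the generators `v`. -/
def IsMixedDouble (v : ι → A) (lam : ι → K) (D : A ⊗[K] A →ₗ[K] A ⊗[K] A) : Prop :=
  LeibnizRules K A D ∧
  ∀ i j : ι,
    D (v i ⊗ₜ[K] v j) + flipT K A (D (v j ⊗ₜ[K] v i)) =
      ((lam i + lam j) / 2) • (v i ⊗ₜ[K] v j - v j ⊗ₜ[K] v i) +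
      ((lam i - lam j) / 2) • ((1 : A) ⊗ₜ[K] (v i * v j) - (v j * v i) ⊗ₜ[K] (1 : A))

/-- Mixed double Poisson algebra structure of weight `lam` w.r.t. the generators `v`. -/
def IsMixedDoublePoisson (v : ι → A) (lam : ι → K) (D : A ⊗[K] A →ₗ[K] A ⊗[K] A) : Prop :=
  IsMixedDouble K A v lam D ∧
  ∀ i j k : ι,
    DJac K A D (v i) (v j) (v k) =
      (-((lam i + lam j) / 2)) • otimes1 K A (v j) (D (v i ⊗ₜ[K] v k)) +
      ((lam i - lam j) / 2) •
        otimes1 K A (1 : A) (((1 : A) ⊗ₜ[K] v j) * D (v i ⊗ₜ[K] v k))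

/-- Modified double Poisson bracket. -/
def IsModifiedDoublePoisson (D : A ⊗[K] A →ₗ[K] A ⊗[K] A) : Prop :=
  LeibnizRules K A D ∧
  (∀ a b : A, br K A D a b + br K A D b a ∈ commutatorSpan K A) ∧
  (∀ a b c : A,
    br K A D a (br K A D b c) - br K A D b (br K A D a c) - br K A D (br K A D a b) c = 0)

end


/-- The map `(u' ⊗ u'') ⊗ (w' ⊗ w'') ↦ u' ⊗ w' ⊗ (w'' u'')`. -/
noncomputable def Tmap (K : Type*) [Field K] (A : Type*) [Ring A] [Algebra K A] :
    ((A ⊗[K] A) ⊗[K] (A ⊗[K] A)) →ₗ[K] (A ⊗[K] A) ⊗[K] A :=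
  LinearMap.lTensor (A ⊗[K] A)
      (LinearMap.mul' K A ∘ₗ (TensorProduct.comm K A A).toLinearMap) ∘ₗ
    (TensorProduct.tensorTensorTensorComm K A A A A).toLinearMap


section Helpers

variable {K : Type*} [Field K] {A : Type*} [Ring A] [Algebra K A]

/-- `(w' ⊗ w'') ⊗ (x' ⊗ x'') ↦ (w' ⊗ (w'' x')) ⊗ x''`. -/
noncomputable def crossMap : ((A ⊗[K] A) ⊗[K] (A ⊗[K] A)) →ₗ[K] (A ⊗[K] A) ⊗[K] A :=
  LinearMap.rTensor A
      (LinearMap.lTensor A (LinearMap.mul' K A) ∘ₗ (TensorProduct.assoc K A A A).toLinearMap) ∘ₗ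
    (TensorProduct.assoc K (A ⊗[K] A) A A).symm.toLinearMap

/-- `(u' ⊗ u'') ⊗ (y' ⊗ y'') ↦ ((u' y') ⊗ y'') ⊗ u''`. -/
noncomputable def crossMap2 : ((A ⊗[K] A) ⊗[K] (A ⊗[K] A)) →ₗ[K] (A ⊗[K] A) ⊗[K] A :=
  (TensorProduct.assoc K A A A).symm.toLinearMap ∘ₗ
    LinearMap.lTensor A (TensorProduct.comm K A A).toLinearMap ∘ₗ
    LinearMap.rTensor (A ⊗[K] A) (LinearMap.mul' K A) ∘ₗ
    (TensorProduct.tensorTensorTensorComm K A A A A).toLinearMap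

@[simp] lemma crossMap_tmul (p q x y : A) :
    crossMap ((p ⊗ₜ[K] q) ⊗ₜ[K] (x ⊗ₜ[K] y)) = (p ⊗ₜ[K] (q * x)) ⊗ₜ[K] y := by
  simp [crossMap]

@[simp] lemma crossMap2_tmul (p q x y : A) :
    crossMap2 ((p ⊗ₜ[K] q) ⊗ₜ[K] (x ⊗ₜ[K] y)) = ((p * x) ⊗ₜ[K] y) ⊗ₜ[K] q := by
  simp [crossMap2]

@[simp] lemma Tmap_tmul (p q x y : A) :
    Tmap K A ((p ⊗ₜ[K] q) ⊗ₜ[K] (x ⊗ₜ[K] y)) = (p ⊗ₜ[K] x) ⊗ₜ[K] (y * q) := by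
  simp [Tmap]

@[simp] lemma swap23_tmul (p q y : A) :
    swap23 K A ((p ⊗ₜ[K] q) ⊗ₜ[K] y) = (p ⊗ₜ[K] y) ⊗ₜ[K] q := by
  simp [swap23]

@[simp] lemma flipT_tmul (x y : A) : flipT K A (x ⊗ₜ[K] y) = y ⊗ₜ[K] x := by
  simp [flipT]

variable (D : A ⊗[K] A →ₗ[K] A ⊗[K] A)

@[simp] lemma dL_tmul (a x y : A) :
    dL K A D a (x ⊗ₜ[K] y) = D (a ⊗ₜ[K] x) ⊗ₜ[K] y := by
  simp [dL]

@[simp] lemma dR_tmul (b x y : A) :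
    dR K A D b (x ⊗ₜ[K] y) =
      (TensorProduct.assoc K A A A).symm (x ⊗ₜ[K] D (b ⊗ₜ[K] y)) := by
  simp [dR]

@[simp] lemma dLfst_tmul (c x y : A) :
    dLfst K A D c (x ⊗ₜ[K] y) = swap23 K A (D (x ⊗ₜ[K] c) ⊗ₜ[K] y) := by
  simp [dLfst]

/- mixed-pure lemmas, induction on the general tensor -/

lemma crossMap_w (w : A ⊗[K] A) (x y : A) :
    crossMap (w ⊗ₜ[K] (x ⊗ₜ[K] y)) = (w * ((1 : A) ⊗ₜ[K] x)) ⊗ₜ[K] y := by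
  induction w using TensorProduct.induction_on with
  | zero => simp
  | tmul p q => simp
  | add u v hu hv => simp only [add_tmul, map_add, hu, hv, add_mul]

lemma crossMap_v (x y : A) (v : A ⊗[K] A) :
    crossMap ((x ⊗ₜ[K] y) ⊗ₜ[K] v) =
      (((1 : A) ⊗ₜ[K] y) ⊗ₜ[K] (1 : A)) * (TensorProduct.assoc K A A A).symm (x ⊗ₜ[K] v) := by
  induction v using TensorProduct.induction_on with
  | zero => simp
  | tmul p q => simp
  | add u v hu hv => simp only [tmul_add, map_add, hu, hv, mul_add]

lemma crossMap2_v (x y : A) (w : A ⊗[K] A) :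
    crossMap2 ((x ⊗ₜ[K] y) ⊗ₜ[K] w) = ((x ⊗ₜ[K] (1 : A)) * w) ⊗ₜ[K] y := by
  induction w using TensorProduct.induction_on with
  | zero => simp
  | tmul p q => simp
  | add u v hu hv => simp only [tmul_add, map_add, hu, hv, mul_add, add_tmul]

lemma crossMap2_w (w : A ⊗[K] A) (x y : A) :
    crossMap2 (w ⊗ₜ[K] (x ⊗ₜ[K] y)) = swap23 K A ((w * (x ⊗ₜ[K] (1 : A))) ⊗ₜ[K] y) := by
  induction w using TensorProduct.induction_on with
  | zero => simp
  | tmul p q => simp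
  | add u v hu hv => simp only [add_tmul, map_add, hu, hv, add_mul]

lemma Tmap_w (x y : A) (w : A ⊗[K] A) :
    Tmap K A ((x ⊗ₜ[K] y) ⊗ₜ[K] w) =
      (TensorProduct.assoc K A A A).symm (x ⊗ₜ[K] (w * ((1 : A) ⊗ₜ[K] y))) := by
  induction w using TensorProduct.induction_on with
  | zero => simp
  | tmul p q => simp
  | add u v hu hv => simp only [tmul_add, map_add, hu, hv, add_mul]

lemma Tmap_v (v : A ⊗[K] A) (y x : A) :
    Tmap K A (v ⊗ₜ[K] (y ⊗ₜ[K] x)) =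
      swap23 K A ((((1 : A) ⊗ₜ[K] x) * v) ⊗ₜ[K] y) := by
  induction v using TensorProduct.induction_on with
  | zero => simp
  | tmul p q => simp
  | add u v hu hv => simp only [add_tmul, map_add, hu, hv, mul_add]

lemma assoc_symm_mul_l (x p q : A) (v : A ⊗[K] A) :
    (TensorProduct.assoc K A A A).symm (x ⊗ₜ[K] ((p ⊗ₜ[K] q) * v)) =
      (((1 : A) ⊗ₜ[K] p) ⊗ₜ[K] q) * (TensorProduct.assoc K A A A).symm (x ⊗ₜ[K] v) := by
  induction v using TensorProduct.induction_on with
  | zero => simp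
  | tmul r s => simp
  | add u v hu hv => simp only [mul_add, tmul_add, map_add, hu, hv]

lemma assoc_symm_mul_r (x p q : A) (v : A ⊗[K] A) :
    (TensorProduct.assoc K A A A).symm (x ⊗ₜ[K] (v * (p ⊗ₜ[K] q))) =
      (TensorProduct.assoc K A A A).symm (x ⊗ₜ[K] v) * (((1 : A) ⊗ₜ[K] p) ⊗ₜ[K] q) := by
  induction v using TensorProduct.induction_on with
  | zero => simp
  | tmul r s => simp
  | add u v hu hv => simp only [add_mul, tmul_add, map_add, hu, hv]

lemma swap23_mul_l (p q y : A) (v : A ⊗[K] A) :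
    swap23 K A (((p ⊗ₜ[K] q) * v) ⊗ₜ[K] y) =
      ((p ⊗ₜ[K] (1 : A)) ⊗ₜ[K] q) * swap23 K A (v ⊗ₜ[K] y) := by
  induction v using TensorProduct.induction_on with
  | zero => simp
  | tmul r s => simp
  | add u v hu hv => simp only [mul_add, add_tmul, map_add, hu, hv]

lemma swap23_mul_r (p q y : A) (v : A ⊗[K] A) :
    swap23 K A ((v * (p ⊗ₜ[K] q)) ⊗ₜ[K] y) =
      swap23 K A (v ⊗ₜ[K] y) * ((p ⊗ₜ[K] (1 : A)) ⊗ₜ[K] q) := by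
  induction v using TensorProduct.induction_on with
  | zero => simp
  | tmul r s => simp
  | add u v hu hv => simp only [add_mul, add_tmul, map_add, hu, hv]

lemma swap23_snd_mul_l (w : A ⊗[K] A) (a y : A) :
    swap23 K A (w ⊗ₜ[K] (a * y)) =
      (((1 : A) ⊗ₜ[K] a) ⊗ₜ[K] (1 : A)) * swap23 K A (w ⊗ₜ[K] y) := by
  induction w using TensorProduct.induction_on with
  | zero => simp
  | tmul r s => simp
  | add u v hu hv => simp only [mul_add, add_tmul, map_add, hu, hv]

lemma swap23_snd_mul_r (w : A ⊗[K] A) (y b : A) :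
    swap23 K A (w ⊗ₜ[K] (y * b)) =
      swap23 K A (w ⊗ₜ[K] y) * (((1 : A) ⊗ₜ[K] b) ⊗ₜ[K] (1 : A)) := by
  induction w using TensorProduct.induction_on with
  | zero => simp
  | tmul r s => simp
  | add u v hu hv => simp only [add_mul, add_tmul, map_add, hu, hv]


lemma assoc_symm_fst_l (c x : A) (v : A ⊗[K] A) :
    (TensorProduct.assoc K A A A).symm ((c * x) ⊗ₜ[K] v) =
      ((c ⊗ₜ[K] (1 : A)) ⊗ₜ[K] (1 : A)) * (TensorProduct.assoc K A A A).symm (x ⊗ₜ[K] v) := by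
  induction v using TensorProduct.induction_on with
  | zero => simp
  | tmul r s => simp
  | add u v hu hv => simp only [mul_add, tmul_add, map_add, hu, hv]

lemma assoc_symm_fst_r (x a : A) (v : A ⊗[K] A) :
    (TensorProduct.assoc K A A A).symm ((x * a) ⊗ₜ[K] v) =
      (TensorProduct.assoc K A A A).symm (x ⊗ₜ[K] v) * ((a ⊗ₜ[K] (1 : A)) ⊗ₜ[K] (1 : A)) := by
  induction v using TensorProduct.induction_on with
  | zero => simp
  | tmul r s => simp
  | add u v hu hv => simp only [add_mul, tmul_add, map_add, hu, hv]

section Plemmas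

lemma dL_lmul_c (hL : LeibnizRules K A D) (a c : A) (u : A ⊗[K] A) :
    dL K A D a ((c ⊗ₜ[K] (1 : A)) * u) =
      ((c ⊗ₜ[K] (1 : A)) ⊗ₜ[K] (1 : A)) * dL K A D a u +
        crossMap (D (a ⊗ₜ[K] c) ⊗ₜ[K] u) := by
  induction u using TensorProduct.induction_on with
  | zero => simp
  | tmul x y =>
      simp only [Algebra.TensorProduct.tmul_mul_tmul, ← Algebra.TensorProduct.one_def, one_mul, mul_one, dL_tmul,
        crossMap_w, hL.1, add_tmul]
  | add u v hu hv => simp only [mul_add, add_mul, map_add, tmul_add, add_tmul, hu, hv]; abel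

lemma dL_rmul_c (a c : A) (u : A ⊗[K] A) :
    dL K A D a (u * ((1 : A) ⊗ₜ[K] c)) =
      dL K A D a u * (((1 : A) ⊗ₜ[K] (1 : A)) ⊗ₜ[K] c) := by
  induction u using TensorProduct.induction_on with
  | zero => simp
  | tmul x y =>
      simp only [Algebra.TensorProduct.tmul_mul_tmul, ← Algebra.TensorProduct.one_def, one_mul, mul_one, dL_tmul]
  | add u v hu hv => simp only [mul_add, add_mul, map_add, hu, hv]

lemma dL_lmul_b (a b : A) (u : A ⊗[K] A) :
    dL K A D a (((1 : A) ⊗ₜ[K] b) * u) =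
      (((1 : A) ⊗ₜ[K] (1 : A)) ⊗ₜ[K] b) * dL K A D a u := by
  induction u using TensorProduct.induction_on with
  | zero => simp
  | tmul x y =>
      simp only [Algebra.TensorProduct.tmul_mul_tmul, ← Algebra.TensorProduct.one_def, one_mul, mul_one, dL_tmul]
  | add u v hu hv => simp only [mul_add, add_mul, map_add, hu, hv]

lemma dL_rmul_b (hL : LeibnizRules K A D) (a b : A) (u : A ⊗[K] A) :
    dL K A D a (u * (b ⊗ₜ[K] (1 : A))) =
      dL K A D a u * (((1 : A) ⊗ₜ[K] b) ⊗ₜ[K] (1 : A)) +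
        crossMap2 (u ⊗ₜ[K] D (a ⊗ₜ[K] b)) := by
  induction u using TensorProduct.induction_on with
  | zero => simp
  | tmul x y =>
      simp only [Algebra.TensorProduct.tmul_mul_tmul, ← Algebra.TensorProduct.one_def, one_mul, mul_one, dL_tmul,
        crossMap2_v, hL.1, add_tmul]
      abel
  | add u v hu hv => simp only [mul_add, add_mul, map_add, add_tmul, hu, hv]; abel

lemma dL_mul_a (hL : LeibnizRules K A D) (a1 a2 : A) (u : A ⊗[K] A) :
    dL K A D (a1 * a2) u =
      (((1 : A) ⊗ₜ[K] a1) ⊗ₜ[K] (1 : A)) * dL K A D a2 u +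
        dL K A D a1 u * ((a2 ⊗ₜ[K] (1 : A)) ⊗ₜ[K] (1 : A)) := by
  induction u using TensorProduct.induction_on with
  | zero => simp
  | tmul x y =>
      simp only [dL_tmul, hL.2, add_tmul, Algebra.TensorProduct.tmul_mul_tmul,
        ← Algebra.TensorProduct.one_def, one_mul, mul_one]
  | add u v hu hv => simp only [mul_add, add_mul, map_add, hu, hv]; abel

lemma dR_lmul_c (b c : A) (u : A ⊗[K] A) :
    dR K A D b ((c ⊗ₜ[K] (1 : A)) * u) =
      ((c ⊗ₜ[K] (1 : A)) ⊗ₜ[K] (1 : A)) * dR K A D b u := by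
  induction u using TensorProduct.induction_on with
  | zero => simp
  | tmul x y =>
      simp only [Algebra.TensorProduct.tmul_mul_tmul, ← Algebra.TensorProduct.one_def, one_mul, mul_one, dR_tmul,
        assoc_symm_fst_l]
  | add u v hu hv => simp only [mul_add, add_mul, map_add, hu, hv]

lemma dR_rmul_c (hL : LeibnizRules K A D) (b c : A) (u : A ⊗[K] A) :
    dR K A D b (u * ((1 : A) ⊗ₜ[K] c)) =
      dR K A D b u * (((1 : A) ⊗ₜ[K] (1 : A)) ⊗ₜ[K] c) +
        crossMap (u ⊗ₜ[K] D (b ⊗ₜ[K] c)) := by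
  induction u using TensorProduct.induction_on with
  | zero => simp
  | tmul x y =>
      simp only [Algebra.TensorProduct.tmul_mul_tmul, ← Algebra.TensorProduct.one_def, one_mul, mul_one, dR_tmul,
        hL.1, tmul_add, map_add, assoc_symm_mul_l, assoc_symm_mul_r, crossMap_v]
      abel
  | add u v hu hv => simp only [mul_add, add_mul, map_add, add_tmul, hu, hv]; abel

lemma dR_lmul_a (hL : LeibnizRules K A D) (b a : A) (u : A ⊗[K] A) :
    dR K A D b (((1 : A) ⊗ₜ[K] a) * u) =
      (((1 : A) ⊗ₜ[K] a) ⊗ₜ[K] (1 : A)) * dR K A D b u +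
        Tmap K A (u ⊗ₜ[K] D (b ⊗ₜ[K] a)) := by
  induction u using TensorProduct.induction_on with
  | zero => simp
  | tmul x y =>
      simp only [Algebra.TensorProduct.tmul_mul_tmul, ← Algebra.TensorProduct.one_def, one_mul, mul_one, dR_tmul,
        hL.1, tmul_add, map_add, assoc_symm_mul_l, assoc_symm_mul_r, Tmap_w]
  | add u v hu hv => simp only [mul_add, add_mul, map_add, add_tmul, hu, hv]; abel

lemma dR_rmul_a (b a : A) (u : A ⊗[K] A) :
    dR K A D b (u * (a ⊗ₜ[K] (1 : A))) =
      dR K A D b u * ((a ⊗ₜ[K] (1 : A)) ⊗ₜ[K] (1 : A)) := by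
  induction u using TensorProduct.induction_on with
  | zero => simp
  | tmul x y =>
      simp only [Algebra.TensorProduct.tmul_mul_tmul, ← Algebra.TensorProduct.one_def, one_mul, mul_one, dR_tmul,
        assoc_symm_fst_r]
  | add u v hu hv => simp only [mul_add, add_mul, map_add, hu, hv]

lemma dR_mul_b (hL : LeibnizRules K A D) (b1 b2 : A) (u : A ⊗[K] A) :
    dR K A D (b1 * b2) u =
      (((1 : A) ⊗ₜ[K] (1 : A)) ⊗ₜ[K] b1) * dR K A D b2 u +
        dR K A D b1 u * (((1 : A) ⊗ₜ[K] b2) ⊗ₜ[K] (1 : A)) := by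
  induction u using TensorProduct.induction_on with
  | zero => simp
  | tmul x y =>
      simp only [dR_tmul, hL.2, tmul_add, map_add, assoc_symm_mul_l, assoc_symm_mul_r]
  | add u v hu hv => simp only [mul_add, add_mul, map_add, hu, hv]; abel

lemma dLfst_mul_c (hL : LeibnizRules K A D) (c1 c2 : A) (u : A ⊗[K] A) :
    dLfst K A D (c1 * c2) u =
      ((c1 ⊗ₜ[K] (1 : A)) ⊗ₜ[K] (1 : A)) * dLfst K A D c2 u +
        dLfst K A D c1 u * (((1 : A) ⊗ₜ[K] (1 : A)) ⊗ₜ[K] c2) := by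
  induction u using TensorProduct.induction_on with
  | zero => simp
  | tmul x y =>
      simp only [dLfst_tmul, hL.1, add_tmul, map_add, swap23_mul_l, swap23_mul_r]
  | add u v hu hv => simp only [mul_add, add_mul, map_add, hu, hv]; abel

lemma dLfst_lmul_b (hL : LeibnizRules K A D) (c b : A) (u : A ⊗[K] A) :
    dLfst K A D c ((b ⊗ₜ[K] (1 : A)) * u) =
      (((1 : A) ⊗ₜ[K] (1 : A)) ⊗ₜ[K] b) * dLfst K A D c u +
        crossMap2 (D (b ⊗ₜ[K] c) ⊗ₜ[K] u) := by
  induction u using TensorProduct.induction_on with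
  | zero => simp
  | tmul x y =>
      simp only [Algebra.TensorProduct.tmul_mul_tmul, ← Algebra.TensorProduct.one_def, one_mul, mul_one, dLfst_tmul,
        hL.2, add_tmul, map_add, swap23_mul_l, swap23_mul_r, crossMap2_w]
  | add u v hu hv => simp only [mul_add, add_mul, map_add, tmul_add, hu, hv]; abel

lemma dLfst_rmul_b (c b : A) (u : A ⊗[K] A) :
    dLfst K A D c (u * ((1 : A) ⊗ₜ[K] b)) =
      dLfst K A D c u * (((1 : A) ⊗ₜ[K] b) ⊗ₜ[K] (1 : A)) := by
  induction u using TensorProduct.induction_on with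
  | zero => simp
  | tmul x y =>
      simp only [Algebra.TensorProduct.tmul_mul_tmul, ← Algebra.TensorProduct.one_def, one_mul, mul_one, dLfst_tmul,
        swap23_snd_mul_r]
  | add u v hu hv => simp only [mul_add, add_mul, map_add, hu, hv]

lemma dLfst_lmul_a (c a : A) (u : A ⊗[K] A) :
    dLfst K A D c (((1 : A) ⊗ₜ[K] a) * u) =
      (((1 : A) ⊗ₜ[K] a) ⊗ₜ[K] (1 : A)) * dLfst K A D c u := by
  induction u using TensorProduct.induction_on with
  | zero => simp
  | tmul x y =>
      simp only [Algebra.TensorProduct.tmul_mul_tmul, ← Algebra.TensorProduct.one_def, one_mul, mul_one, dLfst_tmul,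
        swap23_snd_mul_l]
  | add u v hu hv => simp only [mul_add, add_mul, map_add, hu, hv]

lemma dLfst_rmul_a (hL : LeibnizRules K A D) (c a : A) (u : A ⊗[K] A) :
    dLfst K A D c (u * (a ⊗ₜ[K] (1 : A))) =
      dLfst K A D c u * ((a ⊗ₜ[K] (1 : A)) ⊗ₜ[K] (1 : A)) +
        Tmap K A (D (a ⊗ₜ[K] c) ⊗ₜ[K] flipT K A u) := by
  induction u using TensorProduct.induction_on with
  | zero => simp
  | tmul x y =>
      simp only [Algebra.TensorProduct.tmul_mul_tmul, ← Algebra.TensorProduct.one_def, one_mul, mul_one, dLfst_tmul,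
        hL.2, add_tmul, map_add, swap23_mul_l, swap23_mul_r, Tmap_v, flipT_tmul]
      abel
  | add u v hu hv => simp only [mul_add, add_mul, map_add, tmul_add, hu, hv]; abel

end Plemmas

end Helpers

theorem stmt6 {K : Type*} [Field K] [IsAlgClosed K] [CharZero K]
    (A : Type*) [Ring A] [Algebra K A]
    (D : A ⊗[K] A →ₗ[K] A ⊗[K] A)
    (hL : LeibnizRules K A D) :
    (∀ a b c1 c2 : A,
        DJac K A D a b (c1 * c2) =
          ((c1 ⊗ₜ[K] (1 : A)) ⊗ₜ[K] (1 : A)) * DJac K A D a b c2 +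
            DJac K A D a b c1 * (((1 : A) ⊗ₜ[K] (1 : A)) ⊗ₜ[K] c2)) ∧
    (∀ a b1 b2 c : A,
        DJac K A D a (b1 * b2) c =
          (((1 : A) ⊗ₜ[K] (1 : A)) ⊗ₜ[K] b1) * DJac K A D a b2 c +
            DJac K A D a b1 c * (((1 : A) ⊗ₜ[K] b2) ⊗ₜ[K] (1 : A))) ∧
    (∀ a1 a2 b c : A,
        DJac K A D (a1 * a2) b c =
          (((1 : A) ⊗ₜ[K] a1) ⊗ₜ[K] (1 : A)) * DJac K A D a2 b c +
            DJac K A D a1 b c * ((a2 ⊗ₜ[K] (1 : A)) ⊗ₜ[K] (1 : A)) -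
            Tmap K A (D (a2 ⊗ₜ[K] c) ⊗ₜ[K]
              (D (b ⊗ₜ[K] a1) + flipT K A (D (a1 ⊗ₜ[K] b))))) := by
  obtain ⟨h1, h2⟩ := hL
  have hL' : LeibnizRules K A D := ⟨h1, h2⟩
  refine ⟨?_, ?_, ?_⟩
  · intro a b c1 c2
    simp only [DJac, h1, map_add,
      dL_lmul_c D hL', dL_rmul_c, dR_lmul_c, dR_rmul_c D hL', dLfst_mul_c D hL',
      mul_sub, sub_mul, mul_add, add_mul]
    abel
  · intro a b1 b2 c
    simp only [DJac, h1, h2, map_add,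
      dL_lmul_b, dL_rmul_b D hL', dR_mul_b D hL', dLfst_lmul_b D hL', dLfst_rmul_b,
      mul_sub, sub_mul, mul_add, add_mul]
    abel
  · intro a1 a2 b c
    simp only [DJac, h2, map_add, tmul_add,
      dL_mul_a D hL', dR_lmul_a D hL', dR_rmul_a, dLfst_lmul_a, dLfst_rmul_a D hL',
      mul_sub, sub_mul, mul_add, add_mul]
    abel
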